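/- arXiv:2604.05451 — 2 statements merged into one kernel-verified Lean document; each statement's English description precedes it below -/
import Mathlib

section
/- Let g : [0,∞) → ℝ be C² with g(s) > 0, g'(s) < 0, g''(s) > 0 for all s ≥ 0, g' ∈ L¹(0,∞), and g(s) → 0 as s → ∞. Then for every ε > 0 there exists δ > 0 such that for all real λ with |λ| ≥ ε, ∫₀^∞ |g'(s)| · |1 - e^{-iλs}|² ds ≥ δ. -/
/-!
On a compact interval `[a, b] ⊂ (0, ∞)` the continuous function `|g'|` is bounded below by some
`m > 0`, and `|1 - e^{-iλs}|² = 2 (1 - cos λs)`. Since `∫ₐᵇ cos λs ds = (sin λb - sin λa)/λ` is at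
most `2/|λ| ≤ 2/ε` in absolute value, taking `b - a = 1 + 2/ε` makes `∫ₐᵇ (1 - cos λs) ds ≥ 1`
uniformly in `|λ| ≥ ε`, so the whole integral is at least `2m`.
-/

open MeasureTheory Set Filter

lemma norm_one_sub_exp_neg_I_mul_sq (lam s : ℝ) :
    ‖(1 : ℂ) - Complex.exp (-(Complex.I * lam * s))‖ ^ 2 = 2 * (1 - Real.cos (lam * s)) := by
  have h : -(Complex.I * lam * s) = ((-(lam * s) : ℝ) : ℂ) * Complex.I := by
    push_cast; ring
  rw [h, Complex.exp_mul_I, Complex.sq_norm, Complex.normSq_apply]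
  simp only [Complex.sub_re, Complex.sub_im, Complex.add_re, Complex.add_im, Complex.one_re,
    Complex.one_im, Complex.mul_re, Complex.mul_im, Complex.I_re, Complex.I_im,
    Complex.cos_ofReal_re, Complex.cos_ofReal_im, Complex.sin_ofReal_re, Complex.sin_ofReal_im,
    Real.cos_neg, Real.sin_neg]
  nlinarith [Real.sin_sq_add_cos_sq (lam * s)]

lemma sub_sub_two_div_abs_le_integral_one_sub_cos {lam : ℝ} (hlam : lam ≠ 0) (a b : ℝ) :
    b - a - 2 / |lam| ≤ ∫ s in a..b, (1 - Real.cos (lam * s)) := by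
  have hcos :
      (lam * ∫ s in a..b, Real.cos (lam * s)) = Real.sin (lam * b) - Real.sin (lam * a) := by
    rw [intervalIntegral.mul_integral_comp_mul_left, integral_cos]
  have hcos_le : (∫ s in a..b, Real.cos (lam * s)) ≤ 2 / |lam| := by
    rw [le_div_iff₀ (abs_pos.mpr hlam), mul_comm]
    calc (|lam| * ∫ s in a..b, Real.cos (lam * s))
        ≤ |lam * ∫ s in a..b, Real.cos (lam * s)| := by rw [abs_mul]; gcongr; exact le_abs_self _
      _ ≤ 2 := by
        rw [hcos, abs_le]
        constructor <;> linarith [Real.neg_one_le_sin (lam * b), Real.sin_le_one (lam * b),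
          Real.neg_one_le_sin (lam * a), Real.sin_le_one (lam * a)]
  rw [intervalIntegral.integral_sub intervalIntegrable_const
    (Continuous.intervalIntegrable (by fun_prop) _ _), intervalIntegral.integral_const,
    smul_eq_mul, mul_one]
  linarith

lemma mul_integral_one_sub_cos_le_setIntegral_Ioi {k : ℝ → ℝ} (hk : IntegrableOn k (Ioi 0))
    (hk_nonneg : ∀ s > 0, 0 ≤ k s) {a b m : ℝ} (ha : 0 < a) (hab : a ≤ b)
    (hm : ∀ s ∈ Icc a b, m ≤ k s) (lam : ℝ) :
    (m * ∫ s in a..b, (1 - Real.cos (lam * s))) ≤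
      ∫ s in Ioi 0, k s * (1 - Real.cos (lam * s)) := by
  have hcos_nonneg : ∀ s, 0 ≤ 1 - Real.cos (lam * s) := fun s => by
    linarith [Real.cos_le_one (lam * s)]
  have hIcc : Icc a b ⊆ Ioi 0 := fun s hs => ha.trans_le hs.1
  have hint : IntegrableOn (fun s => k s * (1 - Real.cos (lam * s))) (Ioi 0) :=
    hk.mul_bdd (c := 2) (Continuous.aestronglyMeasurable (by fun_prop)) <| .of_forall fun s => by
      rw [Real.norm_eq_abs, abs_le]
      constructor <;> linarith [Real.neg_one_le_cos (lam * s), Real.cos_le_one (lam * s)]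
  calc (m * ∫ s in a..b, (1 - Real.cos (lam * s)))
      = ∫ s in Icc a b, m * (1 - Real.cos (lam * s)) := by
        rw [integral_Icc_eq_integral_Ioc, ← intervalIntegral.integral_of_le hab,
          intervalIntegral.integral_const_mul]
    _ ≤ ∫ s in Icc a b, k s * (1 - Real.cos (lam * s)) :=
        setIntegral_mono_on (Continuous.integrableOn_Icc (by fun_prop)) (hint.mono_set hIcc)
          measurableSet_Icc fun s hs => mul_le_mul_of_nonneg_right (hm s hs) (hcos_nonneg s)
    _ ≤ ∫ s in Ioi 0, k s * (1 - Real.cos (lam * s)) :=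
        setIntegral_mono_set hint (ae_restrict_of_forall_mem measurableSet_Ioi fun s hs =>
          mul_nonneg (hk_nonneg s hs) (hcos_nonneg s)) hIcc.eventuallyLE

theorem stmt0_general (g : ℝ → ℝ)
    (hg : ContDiffOn ℝ 2 g (Ici 0))
    (hg' : ∀ s ≥ (0:ℝ), deriv g s < 0)
    (hint : IntegrableOn (deriv g) (Ioi 0)) :
    ∀ ε > (0:ℝ), ∃ δ > (0:ℝ), ∀ lam : ℝ, ε ≤ |lam| →
      δ ≤ ∫ s in Ioi (0:ℝ),
        |deriv g s| * ‖(1 : ℂ) - Complex.exp (-(Complex.I * lam * s))‖ ^ 2 := by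
  intro ε hε
  set b : ℝ := 1 + (1 + 2 / ε)
  have hb : 1 ≤ b := by linarith [show 0 < 2 / ε by positivity]
  have hcont : ContinuousOn (fun s => |deriv g s|) (Icc 1 b) :=
    ((hg.mono (Ioi_subset_Ici le_rfl)).continuousOn_deriv_of_isOpen isOpen_Ioi
      (by norm_num)).abs.mono fun s hs => one_pos.trans_le hs.1
  obtain ⟨s₀, hs₀, hmin⟩ := isCompact_Icc.exists_isMinOn (nonempty_Icc.mpr hb) hcont
  have hm : 0 < |deriv g s₀| := abs_pos.mpr (hg' s₀ (zero_le_one.trans hs₀.1)).ne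
  refine ⟨2 * |deriv g s₀|, by positivity, fun lam hlam => ?_⟩
  have hoscillation : 1 ≤ ∫ s in 1..b, (1 - Real.cos (lam * s)) := by
    have hlam0 : 0 < |lam| := hε.trans_le hlam
    have := sub_sub_two_div_abs_le_integral_one_sub_cos (abs_pos.mp hlam0) 1 b
    have : 2 / |lam| ≤ 2 / ε := div_le_div_of_nonneg_left zero_le_two hε hlam
    linarith
  have hlower := mul_integral_one_sub_cos_le_setIntegral_Ioi hint.abs (fun s _ => abs_nonneg _)
    one_pos hb (fun s hs => hmin hs) lam
  simp_rw [norm_one_sub_exp_neg_I_mul_sq, mul_left_comm _ (2 : ℝ)]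
  rw [integral_const_mul]
  nlinarith

/-- Key lower bound on the memory kernel: for every ε > 0 there is δ > 0 such that
for all real λ with |λ| ≥ ε, ∫₀^∞ |g'(s)| |1 - e^{-iλs}|² ds ≥ δ. -/
theorem stmt0 (g : ℝ → ℝ)
    (hg : ContDiffOn ℝ 2 g (Ici 0))
    (hgpos : ∀ s ≥ (0:ℝ), 0 < g s)
    (hg' : ∀ s ≥ (0:ℝ), deriv g s < 0)
    (hg'' : ∀ s ≥ (0:ℝ), 0 < deriv (deriv g) s)
    (hint : IntegrableOn (deriv g) (Ioi 0))
    (hlim : Tendsto g atTop (nhds 0)) :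
    ∀ ε > (0:ℝ), ∃ δ > (0:ℝ), ∀ lam : ℝ, ε ≤ |lam| →
      δ ≤ ∫ s in Ioi (0:ℝ),
        |deriv g s| * ‖(1 : ℂ) - Complex.exp (-(Complex.I * lam * s))‖ ^ 2 :=
  stmt0_general g hg hg' hint
end

section
/- Let J, ξ, d, γ, β, b, m be real parameters with β ≠ 0, b > 0, and let λ ≠ 0 be real. Suppose Jλ² - ξ + dγ/β ≠ 0 and set q₁ = (Jλ² - ξ + dγ/β) / (-b + imγ/(βλ)). Then q₁ ≠ 0, and moreover i(aγλ/β) + (i kγ/(βλ) - m) q₁ + i d λ ≠ 0 provided the parameters additionally satisfy a, k, d > 0, m ≠ 0, γ > 0. -/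
open Complex

theorem neg_ofReal_add_I_mul_ofReal_ne_zero {b μ : ℝ} (hb : b ≠ 0) :
    (-b + I * μ : ℂ) ≠ 0 :=
  fun h ↦ hb (by simpa using congrArg re h)

/- Multiplying by the denominator `-b + i μ` gives `-(A μ + m N) + i (κ N - b A)`;
if both parts vanish, eliminating `A` leaves `N (κ μ + m b) = 0`. -/
theorem I_mul_add_mul_div_ne_zero {A κ m N b μ : ℝ} (hN : N ≠ 0) (hb : b ≠ 0)
    (h : κ * μ + m * b ≠ 0) :
    I * A + (I * κ - m) * (N / (-b + I * μ)) ≠ 0 := by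
  have hD := neg_ofReal_add_I_mul_ofReal_ne_zero (μ := μ) hb
  intro hE
  have hED : (I * A + (I * κ - m) * (N / (-b + I * μ))) * (-b + I * μ) =
      -(A * μ + m * N : ℝ) + I * (κ * N - b * A : ℝ) := by
    rw [add_mul, mul_assoc _ (_ / _), div_mul_cancel₀ _ hD]
    push_cast
    ring_nf
    rw [I_sq]
    ring
  rw [hE, zero_mul] at hED
  have hre : A * μ + m * N = 0 := by
    have := congrArg re hED
    simp only [zero_re, add_re, neg_re, ofReal_re, I_mul_re, ofReal_im, neg_zero, add_zero] at this
    linarith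
  have him : κ * N - b * A = 0 := by
    have := congrArg im hED
    simp only [zero_im, add_im, neg_im, ofReal_im, I_mul_im, ofReal_re, neg_zero, zero_add] at this
    linarith
  exact mul_ne_zero hN h (by linear_combination μ * him + b * hre)

theorem stmt9_general (J ξ d γ β b m a k lam : ℝ)
    (hb : 0 < b)
    (hk : 0 < k) (hm : m ≠ 0)
    (hnum : J * lam ^ 2 - ξ + d * γ / β ≠ 0)
    (q₁ : ℂ)
    (hq : q₁ = ((J * lam ^ 2 - ξ + d * γ / β : ℝ) : ℂ) /
        (-(b : ℂ) + Complex.I * m * γ / (β * lam))) :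
    q₁ ≠ 0 ∧
      Complex.I * ((a * γ * lam / β : ℝ) : ℂ)
        + (Complex.I * ((k * γ / (β * lam) : ℝ) : ℂ) - (m : ℂ)) * q₁
        + Complex.I * d * lam ≠ 0 := by
  set μ : ℝ := m * γ / (β * lam)
  have hden : -(b : ℂ) + I * m * γ / (β * lam) = -b + I * μ := by
    simp only [μ]; push_cast; ring
  rw [hden] at hq
  refine ⟨hq ▸ div_ne_zero (ofReal_ne_zero.mpr hnum)
    (neg_ofReal_add_I_mul_ofReal_ne_zero hb.ne'), ?_⟩
  have hcoupling : k * γ / (β * lam) * μ + m * b = m * (k * (γ / (β * lam)) ^ 2 + b) := by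
    simp only [μ]; ring
  have key := I_mul_add_mul_div_ne_zero (A := a * γ * lam / β + d * lam) hnum hb.ne'
    (hcoupling ▸ mul_ne_zero hm (by positivity))
  rw [← hq] at key
  convert key using 1
  push_cast
  ring

/-- Key algebraic lemma: if Jλ² - ξ + dγ/β ≠ 0 then
q₁ = (Jλ² - ξ + dγ/β)/(-b + imγ/(βλ)) ≠ 0 and
i(aγλ/β) + (ikγ/(βλ) - m) q₁ + idλ ≠ 0. -/
theorem stmt9 (J ξ d γ β b m a k lam : ℝ)
    (hβ : β ≠ 0) (hb : 0 < b) (hlam : lam ≠ 0)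
    (ha : 0 < a) (hk : 0 < k) (hd : 0 < d) (hm : m ≠ 0) (hγ : 0 < γ)
    (hnum : J * lam ^ 2 - ξ + d * γ / β ≠ 0)
    (q₁ : ℂ)
    (hq : q₁ = ((J * lam ^ 2 - ξ + d * γ / β : ℝ) : ℂ) /
        (-(b : ℂ) + Complex.I * m * γ / (β * lam))) :
    q₁ ≠ 0 ∧
      Complex.I * ((a * γ * lam / β : ℝ) : ℂ)
        + (Complex.I * ((k * γ / (β * lam) : ℝ) : ℂ) - (m : ℂ)) * q₁
        + Complex.I * d * lam ≠ 0 :=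
  stmt9_general J ξ d γ β b m a k lam hb hk hm hnum q₁ hq
end
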